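/- arXiv:math/0204290 — 3 statements merged into one kernel-verified Lean document; each statement's English description precedes it below -/
import Mathlib

section
/- For every complex number a, the 2×2 complex matrices H = diag(a+1, a-1), K = diag(𝒊^(a+1), -𝒊^(a+1)), X = [[0,0],[𝒊^(a+1) - 𝒊^(-a-1), 0]], Y = [[0,1],[0,0]] satisfy the relations YX - XY = K - K⁻¹, HX - XH = -2X, HY - YH = 2Y, KX = -XK, and KY = -YK. (Here K is invertible since 𝒊^(a+1) ≠ 0.) -/
open Matrix

/-- `ip x` is 𝒊^x := exp(xπ√-1/2). -/
noncomputable def ip (x : ℂ) : ℂ := Complex.exp (x * (Real.pi * Complex.I) / 2)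

noncomputable def Hm (a : ℂ) : Matrix (Fin 2) (Fin 2) ℂ := !![a + 1, 0; 0, a - 1]
noncomputable def Km (a : ℂ) : Matrix (Fin 2) (Fin 2) ℂ :=
  !![ip (a + 1), 0; 0, -ip (a + 1)]
noncomputable def Xm (a : ℂ) : Matrix (Fin 2) (Fin 2) ℂ :=
  !![0, 0; ip (a + 1) - ip (-a - 1), 0]
def Ym : Matrix (Fin 2) (Fin 2) ℂ := !![0, 1; 0, 0]

lemma ip_mul_ip_neg (x : ℂ) : ip x * ip (-x - 0) = 1 := by
  simp only [ip, ← Complex.exp_add, sub_zero]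
  rw [show x * (Real.pi * Complex.I) / 2 + -x * (Real.pi * Complex.I) / 2 = 0 by ring]
  exact Complex.exp_zero

lemma ip_mul (x : ℂ) : ip x * ip (-x) = 1 := by
  simpa using ip_mul_ip_neg x

lemma Km_mul_inv (a : ℂ) :
    Km a * !![ip (-a - 1), 0; 0, -ip (-a - 1)] = 1 := by
  have h : ip (a + 1) * ip (-a - 1) = 1 := by
    have := ip_mul (a + 1); rwa [show -(a + 1) = -a - 1 by ring] at this
  ext i j <;> fin_cases i <;> fin_cases j <;>
    simp [Km, Matrix.mul_apply, Fin.sum_univ_two, Matrix.one_apply, h]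

/-- The matrices H, K, X, Y of the representation I(a) of U_𝒊 sl(2) satisfy
the defining relations YX - XY = K - K⁻¹, [H,X] = -2X, [H,Y] = 2Y,
KX = -XK, KY = -YK, and K is invertible. -/
theorem stmt_6 (a : ℂ) :
    IsUnit (Km a) ∧
    Ym * Xm a - Xm a * Ym = Km a - (Km a)⁻¹ ∧
    Hm a * Xm a - Xm a * Hm a = -((2 : ℂ) • Xm a) ∧
    Hm a * Ym - Ym * Hm a = (2 : ℂ) • Ym ∧
    Km a * Xm a = -(Xm a * Km a) ∧
    Km a * Ym = -(Ym * Km a) := by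
  have hinv : (Km a)⁻¹ = !![ip (-a - 1), 0; 0, -ip (-a - 1)] :=
    Matrix.inv_eq_right_inv (Km_mul_inv a)
  refine ⟨@isUnit_of_invertible _ _ _ (invertibleOfRightInverse _ _ (Km_mul_inv a)), ?_, ?_, ?_, ?_, ?_⟩ <;>
    (try rw [hinv]) <;>
    simp only [Hm, Km, Xm, Ym] <;>
    ext i j <;> fin_cases i <;> fin_cases j <;>
    simp [Matrix.mul_apply, Fin.sum_univ_two] <;> ring
end

section
/- Let a ∈ ℂ be such that a is not an odd integer, and consider the 2×2 matrices X = [[0,0],[𝒊^(a+1) - 𝒊^(-a-1), 0]] and Y = [[0,1],[0,0]] acting on ℂ². Then every linear subspace of ℂ² invariant under both X and Y is either {0} or all of ℂ². (Equivalently, the representation I(a) of U_𝒊 sl(2) is irreducible.) -/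
open Matrix

/-! The representation is spanned by `e₀, e₁`, with `X e₀ = c e₁` and `Y e₁ = e₀`. A nonzero
invariant vector yields `e₁` (apply `X`, or `Y` and then `X`), and `Y e₁ = e₀`, so the only
invariant subspaces are `0` and `ℂ²` as soon as `c = 𝒊^(a+1) - 𝒊^(-a-1) ≠ 0`. Since `𝒊` has
order `4`, `c = 0` forces `(a + 1) - (-a - 1) ∈ 4ℤ`, i.e. `a` odd. -/

open Complex in
theorem ip_eq_ip_iff {x y : ℂ} : ip x = ip y ↔ ∃ n : ℤ, x = y + 4 * n := by
  have hπI : (Real.pi : ℂ) * I ≠ 0 := mul_ne_zero (ofReal_ne_zero.2 Real.pi_ne_zero) I_ne_zero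
  simp only [ip, exp_eq_exp_iff_exists_int]
  refine exists_congr fun n => ⟨fun h => ?_, fun h => by rw [h]; ring⟩
  apply mul_right_cancel₀ hπI
  linear_combination 2 * h

theorem ip_sub_ip_neg_ne_zero {a : ℂ} (ha : ¬ ∃ n : ℤ, a = 2 * n + 1) :
    ip (a + 1) - ip (-a - 1) ≠ 0 := by
  rw [sub_ne_zero, Ne, ip_eq_ip_iff]
  rintro ⟨n, hn⟩
  exact ha ⟨n - 1, by push_cast; linear_combination hn / 2⟩

section

variable {R : Type*} [Semiring R]

theorem mulVec_lowerShift (c : R) (v : Fin 2 → R) :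
    !![0, 0; c, 0] *ᵥ v = (c * v 0) • Pi.single 1 1 := by
  ext i; fin_cases i <;> simp [mulVec, dotProduct, Fin.sum_univ_two]

theorem mulVec_upperShift (v : Fin 2 → R) :
    !![0, 1; 0, 0] *ᵥ v = v 1 • Pi.single 0 1 := by
  ext i; fin_cases i <;> simp [mulVec, dotProduct, Fin.sum_univ_two]

end

theorem Submodule.eq_bot_or_eq_top_of_shift_invariant {K : Type*} [DivisionRing K] {c : K}
    (hc : c ≠ 0) (S : Submodule K (Fin 2 → K)) (hX : ∀ v ∈ S, !![0, 0; c, 0] *ᵥ v ∈ S)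
    (hY : ∀ v ∈ S, !![0, 1; 0, 0] *ᵥ v ∈ S) : S = ⊥ ∨ S = ⊤ := by
  refine or_iff_not_imp_left.2 fun hS => ?_
  obtain ⟨v, hv, hv0⟩ := Submodule.exists_mem_ne_zero_of_ne_bot hS
  have he₁ : Pi.single 1 1 ∈ S := by
    by_cases h0 : v 0 = 0
    · have h1 : v 1 ≠ 0 := fun h1 => hv0 (by ext i; fin_cases i <;> assumption)
      have he₀ : Pi.single 0 1 ∈ S := (S.smul_mem_iff h1).1 (mulVec_upperShift v ▸ hY v hv)
      have hXe₀ := mulVec_lowerShift c _ ▸ hX _ he₀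
      exact (S.smul_mem_iff (by simpa using hc)).1 hXe₀
    · exact (S.smul_mem_iff (mul_ne_zero hc h0)).1 (mulVec_lowerShift c v ▸ hX v hv)
  have he₀ : Pi.single 0 1 ∈ S := by
    simpa only [mulVec_upperShift, Pi.single_eq_same, one_smul] using hY _ he₁
  rw [eq_top_iff, ← (Pi.basisFun K (Fin 2)).span_eq, Submodule.span_le, Set.range_subset_iff]
  intro i
  fin_cases i <;> simpa

/-- If a is not an odd integer, then the only subspaces of ℂ² invariant under
both X and Y are {0} and ℂ²; i.e. the representation I(a) of U_𝒊 sl(2) is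
irreducible. -/
theorem stmt_7 (a : ℂ) (ha : ¬ ∃ n : ℤ, a = 2 * n + 1) :
    ∀ S : Submodule ℂ (Fin 2 → ℂ),
      (∀ v ∈ S, (Xm a).mulVec v ∈ S) →
      (∀ v ∈ S, Ym.mulVec v ∈ S) →
      S = ⊥ ∨ S = ⊤ :=
  Submodule.eq_bot_or_eq_top_of_shift_invariant (ip_sub_ip_neg_ne_zero ha)
end

section
/- Fix a ∈ ℂ and let ρ_a be the representation of the generators H, K, X, Y on ℂ² given by ρ_a(H) = diag(a+1, a-1), ρ_a(K) = diag(𝒊^(a+1), -𝒊^(a+1)), ρ_a(X) = [[0,0],[𝒊^(a+1) - 𝒊^(-a-1), 0]], ρ_a(Y) = [[0,1],[0,0]]. Define the dual action on ℂ² by ρ_a∨(T) = (ρ_a(s(T)))ᵀ, where the antipode acts by s(H) = -H, s(K) = K⁻¹, s(X) = -ρ_a(X)ρ_a(K), s(Y) = -ρ_a(K)⁻¹ρ_a(Y). Then the linear map f : ℂ² → ℂ² given by the matrix [[0, 𝒊^(a-1)],[1, 0]] (i.e., e⁰ ↦ e₁, e¹ ↦ 𝒊^(a-1) e₀) is invertible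 and satisfies f ∘ ρ_a∨(T) = ρ_(-a)(T) ∘ f for each generator T ∈ {H, K, X, Y}. -/
open Matrix

/-! Writing q = 𝒊^(a+1), the rule 𝒊^(x+2) = -𝒊^x gives 𝒊^(a-1) = -q, 𝒊^(-a-1) = q⁻¹ and
𝒊^(-a+1) = -q⁻¹, so every matrix involved has entries in ℤ[a, q, q⁻¹] and each intertwining
identity becomes an entrywise computation there. -/

lemma ip_add (x y : ℂ) : ip (x + y) = ip x * ip y := by
  rw [ip, ip, ip, ← Complex.exp_add]
  ring_nf

lemma ip_ne_zero (x : ℂ) : ip x ≠ 0 := Complex.exp_ne_zero _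

lemma ip_two : ip 2 = -1 := by
  rw [ip, mul_div_cancel_left₀ _ two_ne_zero, Complex.exp_pi_mul_I]

lemma ip_sub_one (x : ℂ) : ip (x - 1) = -ip (x + 1) := by
  rw [show x + 1 = x - 1 + 2 by ring, ip_add, ip_two, mul_neg_one, neg_neg]

lemma ip_neg_add_one (x : ℂ) : ip (-x + 1) = -(ip (x + 1))⁻¹ := by
  have h : ip (-x + 1) * ip (x + 1) = -1 := by
    rw [← ip_add, show -x + 1 + (x + 1) = 2 by ring, ip_two]
  rw [neg_inv]
  exact eq_inv_of_mul_eq_one_left (by rw [mul_neg, h, neg_neg])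

lemma Km_inv (a : ℂ) : (Km a)⁻¹ = !![(ip (a + 1))⁻¹, 0; 0, -(ip (a + 1))⁻¹] := by
  refine inv_eq_right_inv ?_
  simp [Km, ip_ne_zero, one_fin_two]

noncomputable def dualIso (a : ℂ) : Matrix (Fin 2) (Fin 2) ℂ := !![0, ip (a - 1); 1, 0]

lemma isUnit_dualIso (a : ℂ) : IsUnit (dualIso a) := by
  simp [isUnit_iff_isUnit_det, dualIso, det_fin_two_of, ip_ne_zero]

lemma dualIso_intertwines_H (a : ℂ) : dualIso a * (-(Hm a))ᵀ = Hm (-a) * dualIso a := by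
  ext i j
  fin_cases i <;> fin_cases j <;>
    simp [dualIso, Hm, mul_apply, Fin.sum_univ_two, ip_sub_one] <;> ring

lemma dualIso_intertwines_K (a : ℂ) : dualIso a * ((Km a)⁻¹)ᵀ = Km (-a) * dualIso a := by
  rw [Km_inv]
  ext i j
  fin_cases i <;> fin_cases j <;>
    simp [dualIso, Km, mul_apply, Fin.sum_univ_two, ip_sub_one, ip_neg_add_one, ip_ne_zero]

lemma dualIso_intertwines_X (a : ℂ) : dualIso a * (-(Xm a * Km a))ᵀ = Xm (-a) * dualIso a := by
  ext i j
  fin_cases i <;> fin_cases j <;>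
    simp [dualIso, Km, Xm, mul_apply, Fin.sum_univ_two, ip_sub_one, ip_neg_add_one,
      ip_ne_zero]
  ring

lemma dualIso_intertwines_Y (a : ℂ) : dualIso a * (-((Km a)⁻¹ * Ym))ᵀ = Ym * dualIso a := by
  rw [Km_inv]
  ext i j
  fin_cases i <;> fin_cases j <;>
    simp [dualIso, Ym, mul_apply, Fin.sum_univ_two, ip_sub_one, ip_ne_zero]

/-- The explicit map f : e⁰ ↦ e₁, e¹ ↦ 𝒊^(a-1) e₀ is an isomorphism from the
dual of the U_𝒊 sl(2)-module I(a) onto I(-a): it is invertible and intertwines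
the dual action ρ_a∨(T) = (ρ_a(s(T)))ᵀ with ρ_{-a}(T) for each generator
T ∈ {H, K, X, Y}, where s(H) = -H, s(K) = K⁻¹, s(X) = -XK, s(Y) = -K⁻¹Y. -/
theorem stmt_8 (a : ℂ) :
    let f : Matrix (Fin 2) (Fin 2) ℂ := !![0, ip (a - 1); 1, 0]
    IsUnit f ∧
    f * (-(Hm a))ᵀ = Hm (-a) * f ∧
    f * ((Km a)⁻¹)ᵀ = Km (-a) * f ∧
    f * (-(Xm a * Km a))ᵀ = Xm (-a) * f ∧
    f * (-((Km a)⁻¹ * Ym))ᵀ = Ym * f := by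
  exact ⟨isUnit_dualIso a, dualIso_intertwines_H a, dualIso_intertwines_K a,
    dualIso_intertwines_X a, dualIso_intertwines_Y a⟩
end
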